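/- Let d ≥ 1, J > 0, β ≥ 0 and let Λ ⊂ ℤ^d be finite. For every n ≥ 2 and every tree T on the vertex set {1,…,n}, (1/|Λ|^n) Σ_{(x_1,…,x_n) ∈ Λ^n} Π_{{i,j} ∈ E(T)} (1 − e^{−β|V(x_i−x_j)|}) ≤ [C̄_{J,d}(β)]^{n−1} / |Λ|^{n−1}, where C̄_{J,d}(β) := 1 + 2d(1 − e^{−4βJ}) and the factor 1 − e^{−β|V(x)|} is interpreted as 1 when x = 0. -/

import Mathlib

open scoped BigOperators Classical

noncomputable section
namespace IsingCE

/-- squared Euclidean norm on `ℤ^d`; it equals `1` exactly at nearest neighbors. -/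
def sqnorm {d : ℕ} (x : Fin d → ℤ) : ℤ := ∑ i, (x i)^2

/-- the tree-graph factor `1 - e^{-β|V(x)|}`, interpreted as `1` at `x = 0`. -/
noncomputable def phiTG (d : ℕ) (β J : ℝ) (x : Fin d → ℤ) : ℝ :=
  if x = 0 then 1 else if sqnorm x = 1 then 1 - Real.exp (-(4*β*J)) else 0

/-- `C̄_{J,d}(β) = 1 + 2d(1 - e^{-4βJ})`. -/
noncomputable def Cbar (d : ℕ) (β J : ℝ) : ℝ := 1 + 2*d*(1 - Real.exp (-(4*β*J)))

/-- product of the weights `w i j` over the edges of the graph `g`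
(each edge `{i,j}` counted once, with `i < j`). -/
noncomputable def graphProd {α : Type*} [Fintype α] [LinearOrder α]
    (g : SimpleGraph α) (w : α → α → ℝ) : ℝ :=
  ∏ p ∈ Finset.univ.filter (fun p : α × α => p.1 < p.2 ∧ g.Adj p.1 p.2), w p.1 p.2


/-!
Root the tree at `r` and let `p v` be a neighbour of `v ≠ r` closer to `r`. The edges `{v, p v}`
are distinct edges of the tree, and since every factor lies in `[0, 1]` it suffices to bound
`∑_x ∏_{v ≠ r} φ(x_v - x_{p v})`. Summing out the coordinates in order of decreasing distance to
`r`, each `x_v` occurs in a single factor and contributes at most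
`sup_z ∑_{y ∈ Λ} φ(y - z) ≤ 1 + 2d(1 - e^{-4βJ})` (the term `y = z` and at most `2d` nearest
neighbours), while the root contributes `|Λ|`.
-/

open Finset Function

section UnitVectors

variable {d : ℕ}

lemma sqnorm_neg (x : Fin d → ℤ) : sqnorm (-x) = sqnorm x := by
  simp [sqnorm]

lemma exists_eq_single_unit_of_sqnorm_eq_one {u : Fin d → ℤ} (h : sqnorm u = 1) :
    ∃ i, ∃ s : ℤˣ, u = Pi.single i (s : ℤ) := by
  obtain ⟨i, hi⟩ : ∃ i, u i ≠ 0 := by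
    by_contra! h0
    simp [sqnorm, h0] at h
  have hzero : ∀ j ≠ i, u j = 0 := by
    intro j hji
    by_contra hj
    have hpair : (u i) ^ 2 + (u j) ^ 2 ≤ sqnorm u := by
      unfold sqnorm
      simpa [sum_pair hji.symm] using
        sum_le_sum_of_subset_of_nonneg (subset_univ {i, j}) fun k _ _ => sq_nonneg (u k)
    nlinarith [Int.one_le_abs hi, Int.one_le_abs hj, sq_abs (u i), sq_abs (u j)]
  have hsq : u i * u i = 1 := by
    rw [← h, sqnorm, sum_eq_single i (fun j _ hj => by simp [hzero j hj]) (by simp), sq]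
  refine ⟨i, (IsUnit.of_mul_eq_one _ hsq).unit, ?_⟩
  ext j
  rcases eq_or_ne j i with rfl | hj
  · simp
  · simp [hzero j hj, hj]

lemma card_filter_sqnorm_sub_eq_one_le (Λ : Finset (Fin d → ℤ)) (z : Fin d → ℤ) :
    #{y ∈ Λ | sqnorm (y - z) = 1} ≤ 2 * d := by
  calc #{y ∈ Λ | sqnorm (y - z) = 1}
      ≤ #((univ : Finset (Fin d × ℤˣ)).image fun is => z + Pi.single is.1 (is.2 : ℤ)) := by
        refine card_le_card fun y hy => ?_
        obtain ⟨i, s, hs⟩ := exists_eq_single_unit_of_sqnorm_eq_one (mem_filter.1 hy).2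
        exact mem_image.2 ⟨(i, s), mem_univ _, by rw [← hs]; abel⟩
    _ ≤ 2 * d := by
        refine card_image_le.trans ?_
        simp [Fintype.card_units_int, mul_comm]

end UnitVectors

section Weights

variable {d : ℕ} {β J : ℝ}

lemma one_sub_exp_nonneg (hJ : 0 ≤ J) (hβ : 0 ≤ β) : 0 ≤ 1 - Real.exp (-(4 * β * J)) := by
  have : Real.exp (-(4 * β * J)) ≤ 1 := Real.exp_le_one_iff.2 (by nlinarith [mul_nonneg hβ hJ])
  linarith

lemma phiTG_nonneg (hJ : 0 ≤ J) (hβ : 0 ≤ β) (x : Fin d → ℤ) : 0 ≤ phiTG d β J x := by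
  have := one_sub_exp_nonneg hJ hβ
  unfold phiTG
  split_ifs <;> linarith

lemma phiTG_le_one (x : Fin d → ℤ) : phiTG d β J x ≤ 1 := by
  have := Real.exp_pos (-(4 * β * J))
  unfold phiTG
  split_ifs <;> linarith

lemma phiTG_neg (x : Fin d → ℤ) : phiTG d β J (-x) = phiTG d β J x := by
  simp only [phiTG, neg_eq_zero, sqnorm_neg]

lemma Cbar_nonneg (hJ : 0 ≤ J) (hβ : 0 ≤ β) : 0 ≤ Cbar d β J := by
  have := one_sub_exp_nonneg hJ hβ
  unfold Cbar
  positivity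

lemma sum_phiTG_sub_le_Cbar (hJ : 0 ≤ J) (hβ : 0 ≤ β) (Λ : Finset (Fin d → ℤ))
    (z : Fin d → ℤ) : ∑ y ∈ Λ, phiTG d β J (y - z) ≤ Cbar d β J := by
  set ε := 1 - Real.exp (-(4 * β * J))
  have hε : 0 ≤ ε := one_sub_exp_nonneg hJ hβ
  have hsplit : ∀ y, phiTG d β J (y - z) ≤
      (if y = z then 1 else 0) + (if sqnorm (y - z) = 1 then ε else 0) := by
    intro y
    simp only [phiTG, sub_eq_zero]
    split_ifs <;> linarith
  calc ∑ y ∈ Λ, phiTG d β J (y - z)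
      ≤ ∑ y ∈ Λ, ((if y = z then 1 else 0) + (if sqnorm (y - z) = 1 then ε else 0)) :=
        sum_le_sum fun y _ => hsplit y
    _ = (if z ∈ Λ then 1 else 0) + #{y ∈ Λ | sqnorm (y - z) = 1} * ε := by
        rw [sum_add_distrib, sum_ite_eq', ← sum_filter, sum_const, nsmul_eq_mul]
    _ ≤ 1 + (2 * d : ℕ) * ε := by
        gcongr
        · split_ifs <;> norm_num
        · exact card_filter_sqnorm_sub_eq_one_le Λ z
    _ = Cbar d β J := by
        simp only [Cbar, ε]
        push_cast
        ring

end Weights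

section Graph

lemma _root_.SimpleGraph.Connected.exists_adj_dist_lt {V : Type*} {G : SimpleGraph V}
    (hG : G.Connected) {r v : V} (hv : v ≠ r) : ∃ w, G.Adj v w ∧ G.dist r w < G.dist r v := by
  obtain ⟨q, hq⟩ := hG.exists_walk_length_eq_dist v r
  obtain ⟨w, hvw, q', rfl⟩ := SimpleGraph.Walk.exists_eq_cons_of_ne hv q
  refine ⟨w, hvw, ?_⟩
  rw [G.dist_comm, G.dist_comm (u := r), ← hq, SimpleGraph.Walk.length_cons]
  exact Nat.lt_succ_of_le (SimpleGraph.dist_le q')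

lemma _root_.SimpleGraph.Connected.exists_parent {V : Type*} {G : SimpleGraph V}
    (hG : G.Connected) (r : V) :
    ∃ p : V → V, ∀ v ≠ r, G.Adj v (p v) ∧ G.dist r (p v) < G.dist r v := by
  choose! p hp using fun v (hv : v ≠ r) => hG.exists_adj_dist_lt hv
  exact ⟨p, hp⟩

variable {V : Type*} [Fintype V] [LinearOrder V]

lemma graphProd_eq_prod_edgeFinset (G : SimpleGraph V) (w : V → V → ℝ)
    (hw : ∀ i j, w i j = w j i) :
    graphProd G w = ∏ e ∈ G.edgeFinset, Sym2.lift ⟨w, hw⟩ e := by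
  refine prod_bij (fun q _ => s(q.1, q.2)) (fun q hq => ?_) (fun q hq q' hq' hqq' => ?_)
    (fun e he => ?_) (fun q _ => rfl)
  · exact G.mem_edgeFinset.2 (mem_filter.1 hq).2.2
  · have h := (mem_filter.1 hq).2.1
    have h' := (mem_filter.1 hq').2.1
    rcases Sym2.eq_iff.1 hqq' with ⟨h1, h2⟩ | ⟨h1, h2⟩
    · exact Prod.ext h1 h2
    · rw [h1, h2] at h
      exact absurd h' h.asymm
  · induction e using Sym2.ind with
    | h a b =>
      have hab := G.mem_edgeFinset.1 he
      rcases lt_or_gt_of_ne hab.ne with h | h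
      · exact ⟨(a, b), mem_filter.2 ⟨mem_univ _, h, hab⟩, rfl⟩
      · exact ⟨(b, a), mem_filter.2 ⟨mem_univ _, h, hab.symm⟩, Sym2.eq_swap⟩

lemma graphProd_le_prod_parent (G : SimpleGraph V) {w : V → V → ℝ} (hw0 : ∀ i j, 0 ≤ w i j)
    (hw1 : ∀ i j, w i j ≤ 1) (hw : ∀ i j, w i j = w j i) {s : Finset V} {p : V → V}
    (h : V → ℕ) (hadj : ∀ v ∈ s, G.Adj v (p v)) (hh : ∀ v ∈ s, h (p v) < h v) :
    graphProd G w ≤ ∏ v ∈ s, w v (p v) := by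
  have hinj : Set.InjOn (fun v => s(v, p v)) s := by
    intro u hu v hv huv
    rcases Sym2.eq_iff.1 huv with ⟨h1, -⟩ | ⟨h1, h2⟩
    · exact h1
    · have hu' := hh u hu
      have hv' := hh v hv
      rw [← h1] at hv'
      rw [h2] at hu'
      omega
  calc graphProd G w = ∏ e ∈ G.edgeFinset, Sym2.lift ⟨w, hw⟩ e :=
        graphProd_eq_prod_edgeFinset G w hw
    _ ≤ ∏ e ∈ s.image fun v => s(v, p v), Sym2.lift ⟨w, hw⟩ e :=
        prod_le_prod_of_subset_of_le_one
          (image_subset_iff.2 fun v hv => G.mem_edgeFinset.2 (hadj v hv))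
          (fun e _ => e.ind fun a b => hw0 a b) (fun e _ _ => e.ind fun a b => hw1 a b)
    _ = ∏ v ∈ s, w v (p v) := prod_image hinj

end Graph

section Configurations

variable {ι α : Type*} [Fintype ι] [DecidableEq ι] (A : Finset α)

lemma sum_sum_update (i : ι) (F : (ι → α) → ℝ) :
    ∑ x ∈ Fintype.piFinset (fun _ => A), ∑ y ∈ A, F (update x i y) =
      #A * ∑ x ∈ Fintype.piFinset (fun _ => A), F x := by
  have hmem : ∀ x ∈ Fintype.piFinset (fun _ => A), ∀ y ∈ A,
      update x i y ∈ Fintype.piFinset (fun _ => A) := by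
    intro x hx y hy
    refine Fintype.mem_piFinset.2 fun k => ?_
    rcases eq_or_ne k i with rfl | hk
    · simpa using hy
    · simpa [update_of_ne hk] using Fintype.mem_piFinset.1 hx k
  rw [mul_sum, ← sum_product']
  -- `(x, y) ↦ (update x i y, x i)` is an involution of `(ι → A) × A`
  simp only [← nsmul_eq_mul, ← sum_const, ← sum_product']
  refine sum_nbij' (fun q => (update q.1 i q.2, q.1 i)) (fun q => (update q.1 i q.2, q.1 i))
    ?_ ?_ ?_ ?_ (fun q _ => rfl)
  all_goals
    intro q hq
    obtain ⟨hx, hy⟩ := mem_product.1 hq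
  · exact mem_product.2 ⟨hmem _ hx _ hy, Fintype.mem_piFinset.1 hx i⟩
  · exact mem_product.2 ⟨hmem _ hx _ hy, Fintype.mem_piFinset.1 hx i⟩
  · simp
  · simp

lemma card_mul_sum_mul_le {i j : ι} (hij : i ≠ j) {g : α → α → ℝ} {C : ℝ}
    (hC : ∀ z ∈ A, ∑ y ∈ A, g y z ≤ C) {H : (ι → α) → ℝ}
    (hH0 : ∀ x ∈ Fintype.piFinset (fun _ => A), 0 ≤ H x) (hH : ∀ x y, H (update x i y) = H x) :
    #A * ∑ x ∈ Fintype.piFinset (fun _ => A), g (x i) (x j) * H x ≤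
      C * ∑ x ∈ Fintype.piFinset (fun _ => A), H x := by
  rw [← sum_sum_update A i, mul_sum]
  refine sum_le_sum fun x hx => ?_
  simp only [update_self, update_of_ne hij.symm, hH, ← sum_mul]
  exact mul_le_mul_of_nonneg_right (hC _ (Fintype.mem_piFinset.1 hx j)) (hH0 x hx)

lemma card_pow_mul_sum_prod_le {g : α → α → ℝ} (hg : ∀ y z, 0 ≤ g y z) {C : ℝ} (hC0 : 0 ≤ C)
    (hC : ∀ z ∈ A, ∑ y ∈ A, g y z ≤ C) (p : ι → ι) (h : ι → ℕ) (s : Finset ι)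
    (hh : ∀ v ∈ s, h (p v) < h v) :
    (#A : ℝ) ^ #s * ∑ x ∈ Fintype.piFinset (fun _ => A), ∏ v ∈ s, g (x v) (x (p v)) ≤
      C ^ #s * #A ^ Fintype.card ι := by
  induction s using Finset.induction_on_max_value h with
  | empty => simp
  | insert a s ha hmax ih =>
    have hpa : a ≠ p a := fun hap => by
      have := hh a (mem_insert_self a s)
      rw [← hap] at this
      omega
    -- `a` has maximal rank, so it is the parent of no vertex of `s`
    have hfree : ∀ x y, ∏ v ∈ s, g (update x a y v) (update x a y (p v)) =
        ∏ v ∈ s, g (x v) (x (p v)) := by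
      intro x y
      refine prod_congr rfl fun v hv => ?_
      have hpv : p v ≠ a := fun hpv => by
        have := hh v (mem_insert_of_mem hv)
        have := hmax v hv
        rw [hpv] at *
        omega
      rw [update_of_ne (ne_of_mem_of_not_mem hv ha), update_of_ne hpv]
    have hstep := card_mul_sum_mul_le A hpa hC (H := fun x => ∏ v ∈ s, g (x v) (x (p v)))
      (fun x _ => prod_nonneg fun v _ => hg _ _) hfree
    have hs := ih fun v hv => hh v (mem_insert_of_mem hv)
    simp only [prod_insert ha, card_insert_of_notMem ha]
    calc (#A : ℝ) ^ (#s + 1) * ∑ x ∈ Fintype.piFinset (fun _ => A),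
          g (x a) (x (p a)) * ∏ v ∈ s, g (x v) (x (p v))
        = #A ^ #s * (#A * ∑ x ∈ Fintype.piFinset (fun _ => A),
          g (x a) (x (p a)) * ∏ v ∈ s, g (x v) (x (p v))) := by ring
      _ ≤ #A ^ #s * (C * ∑ x ∈ Fintype.piFinset (fun _ => A), ∏ v ∈ s, g (x v) (x (p v))) := by
        gcongr
      _ = C * (#A ^ #s * ∑ x ∈ Fintype.piFinset (fun _ => A), ∏ v ∈ s, g (x v) (x (p v))) := by
        ring
      _ ≤ C * (C ^ #s * #A ^ Fintype.card ι) := by gcongr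
      _ = C ^ (#s + 1) * #A ^ Fintype.card ι := by ring

end Configurations

lemma inv_pow_mul_le_div_pow {N S D : ℝ} {n : ℕ} (hn : n ≠ 0) (hN : 0 ≤ N) (hD : 0 ≤ D)
    (h : N ^ (n - 1) * S ≤ D * N ^ n) : (N ^ n)⁻¹ * S ≤ D / N ^ (n - 1) := by
  obtain ⟨m, rfl⟩ := Nat.exists_eq_add_one_of_ne_zero hn
  rw [Nat.add_sub_cancel] at h ⊢
  rcases hN.eq_or_lt with rfl | hN
  · cases m <;> simp [hD]
  have hS : S ≤ D * N := le_of_mul_le_mul_left (by rwa [pow_succ, mul_left_comm] at h) (pow_pos hN m)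
  calc (N ^ (m + 1))⁻¹ * S ≤ (N ^ (m + 1))⁻¹ * (D * N) := by gcongr
    _ = D / N ^ m := by field_simp; ring

theorem tree_graph_sum_bound_general
    (d : ℕ) (J β : ℝ) (hJ : 0 < J) (hβ : 0 ≤ β)
    (Λ : Finset (Fin d → ℤ)) (n : ℕ)
    (T : SimpleGraph (Fin n)) (hT : T.IsTree) :
    ((Λ.card : ℝ) ^ n)⁻¹ *
        ∑ x ∈ Fintype.piFinset (fun _ : Fin n => Λ),
          graphProd T (fun i j => phiTG d β J (x i - x j)) ≤
      Cbar d β J ^ (n-1) / (Λ.card : ℝ) ^ (n-1) := by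
  obtain ⟨r⟩ := hT.connected.nonempty
  obtain ⟨p, hp⟩ := hT.connected.exists_parent r
  have hparent : ∀ v ∈ univ.erase r, T.Adj v (p v) ∧ T.dist r (p v) < T.dist r v :=
    fun v hv => hp v (ne_of_mem_erase hv)
  have htree : ∀ x : Fin n → Fin d → ℤ, graphProd T (fun i j => phiTG d β J (x i - x j)) ≤
      ∏ v ∈ univ.erase r, phiTG d β J (x v - x (p v)) := fun x =>
    graphProd_le_prod_parent T (fun _ _ => phiTG_nonneg hJ.le hβ _) (fun _ _ => phiTG_le_one _)
      (fun i j => by rw [← phiTG_neg, neg_sub]) (T.dist r) (fun v hv => (hparent v hv).1)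
      (fun v hv => (hparent v hv).2)
  have hsum := card_pow_mul_sum_prod_le Λ (g := fun y z => phiTG d β J (y - z))
    (fun _ _ => phiTG_nonneg hJ.le hβ _) (Cbar_nonneg hJ.le hβ)
    (fun z _ => sum_phiTG_sub_le_Cbar hJ.le hβ Λ z) p (T.dist r) (univ.erase r)
    (fun v hv => (hparent v hv).2)
  rw [card_erase_of_mem (mem_univ r), card_univ, Fintype.card_fin] at hsum
  refine inv_pow_mul_le_div_pow r.pos.ne' (Nat.cast_nonneg _) (pow_nonneg (Cbar_nonneg hJ.le hβ) _) (hsum.trans' ?_)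
  gcongr with x
  exact htree x

/-- tree-graph estimate: for every tree `T` on `{1, …, n}`,
`(1/|Λ|ⁿ) Σ_{x ∈ Λⁿ} Π_{{i,j} ∈ E(T)} (1 - e^{-β|V(x_i-x_j)|}) ≤ C̄_{J,d}(β)^{n-1}/|Λ|^{n-1}`. -/
theorem tree_graph_sum_bound
    (d : ℕ) (hd : 1 ≤ d) (J β : ℝ) (hJ : 0 < J) (hβ : 0 ≤ β)
    (Λ : Finset (Fin d → ℤ)) (n : ℕ) (hn : 2 ≤ n)
    (T : SimpleGraph (Fin n)) (hT : T.IsTree) :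
    ((Λ.card : ℝ) ^ n)⁻¹ *
        ∑ x ∈ Fintype.piFinset (fun _ : Fin n => Λ),
          graphProd T (fun i j => phiTG d β J (x i - x j)) ≤
      Cbar d β J ^ (n-1) / (Λ.card : ℝ) ^ (n-1) :=
  tree_graph_sum_bound_general d J β hJ hβ Λ n T hT

end IsingCE
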